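/- There exists a constant C₄ = C₄(α,d) > 0 such that for every bounded measurable function F : ℝ^d×ℝ^d → [0,∞), every t > 0 and all x, y ∈ ℝ^d with |x−y| ≤ t^{1/2}, ∫₀^t ∫_{ℝ^d×ℝ^d} η(t−s; x−z)·η(s; w−y)·F(z,w)/|z−w|^{d+α} dz dw ds ≤ C₄·η(t; x−y)·∫₀^t ∫_{ℝ^d×ℝ^d} ( η(s; x−z) + η(s; w−y) )·F(z,w)/|z−w|^{d+α} dz dw ds. -/

import Mathlib

open MeasureTheory Set ENNReal

noncomputable def eta (d : ℕ) (α t : ℝ) (x : EuclideanSpace ℝ (Fin d)) : ℝ :=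
  t / (t ^ ((1 : ℝ) / 2) + ‖x‖) ^ ((d : ℝ) + α)

lemma eta_nonneg {d : ℕ} {α t : ℝ} (ht : 0 ≤ t) (x : EuclideanSpace ℝ (Fin d)) :
    0 ≤ eta d α t x :=
  div_nonneg ht (Real.rpow_nonneg (add_nonneg (Real.rpow_nonneg ht _) (norm_nonneg _)) _)

lemma my_div_le_div {a b c : ℝ} (h : a ≤ b) (hc : 0 ≤ c) : a / c ≤ b / c :=
  div_le_div_of_nonneg_right h hc

lemma eta_le_rpow {d : ℕ} {α t : ℝ} (hβ : 0 < (d : ℝ) + α) (ht : 0 < t)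
    (x : EuclideanSpace ℝ (Fin d)) : eta d α t x ≤ t ^ (1 - ((d : ℝ) + α) / 2) := by
  have h0 : (0:ℝ) < t ^ ((1:ℝ)/2) := Real.rpow_pos_of_pos ht _
  have h1 : (t ^ ((1:ℝ)/2)) ^ ((d:ℝ)+α) ≤ (t ^ ((1:ℝ)/2) + ‖x‖) ^ ((d:ℝ)+α) :=
    Real.rpow_le_rpow h0.le (le_add_of_nonneg_right (norm_nonneg _)) hβ.le
  have h2 : eta d α t x ≤ t / (t ^ ((1:ℝ)/2)) ^ ((d:ℝ)+α) :=
    div_le_div_of_nonneg_left ht.le (Real.rpow_pos_of_pos h0 _) h1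
  have h3 : (t ^ ((1:ℝ)/2)) ^ ((d:ℝ)+α) = t ^ ((1:ℝ)/2 * ((d:ℝ)+α)) :=
    (Real.rpow_mul ht.le _ _).symm
  have h4 : t / t ^ ((1:ℝ)/2 * ((d:ℝ)+α)) = t ^ (1 - (1:ℝ)/2 * ((d:ℝ)+α)) := by
    rw [Real.rpow_sub ht, Real.rpow_one]
  rw [show 1 - ((d:ℝ)+α)/2 = 1 - (1:ℝ)/2 * ((d:ℝ)+α) by ring]
  calc eta d α t x ≤ t / (t ^ ((1:ℝ)/2)) ^ ((d:ℝ)+α) := h2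
    _ = t ^ (1 - (1:ℝ)/2 * ((d:ℝ)+α)) := by rw [h3, h4]

lemma eta_lower {d : ℕ} {α t : ℝ} (hβ : 0 < (d : ℝ) + α) (ht : 0 < t)
    {x y : EuclideanSpace ℝ (Fin d)} (hxy : ‖x - y‖ ≤ t ^ ((1 : ℝ) / 2)) :
    t ^ (1 - ((d : ℝ) + α) / 2) ≤ 2 ^ ((d : ℝ) + α) * eta d α t (x - y) := by
  have hs : (0:ℝ) < t ^ ((1:ℝ)/2) := Real.rpow_pos_of_pos ht _
  have hden : (t ^ ((1:ℝ)/2) + ‖x - y‖) ^ ((d:ℝ)+α) ≤ (2 * t ^ ((1:ℝ)/2)) ^ ((d:ℝ)+α) :=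
    Real.rpow_le_rpow (add_nonneg hs.le (norm_nonneg _)) (by linarith) hβ.le
  have h1 : t / (2 * t ^ ((1:ℝ)/2)) ^ ((d:ℝ)+α) ≤ eta d α t (x - y) :=
    div_le_div_of_nonneg_left ht.le
      (Real.rpow_pos_of_pos (by positivity) _) hden
  have h2 : t / (2 * t ^ ((1:ℝ)/2)) ^ ((d:ℝ)+α)
      = t ^ (1 - ((d:ℝ)+α)/2) / 2 ^ ((d:ℝ)+α) := by
    rw [Real.mul_rpow (by norm_num) hs.le, ← Real.rpow_mul ht.le]
    rw [show t / (2 ^ ((d:ℝ)+α) * t ^ ((1:ℝ)/2 * ((d:ℝ)+α)))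
        = t / t ^ ((1:ℝ)/2 * ((d:ℝ)+α)) / 2 ^ ((d:ℝ)+α) by ring]
    rw [Real.rpow_sub ht, Real.rpow_one]
    ring_nf
  have h2pos : (0:ℝ) < 2 ^ ((d:ℝ)+α) := Real.rpow_pos_of_pos (by norm_num) _
  rw [h2] at h1
  calc t ^ (1 - ((d:ℝ)+α)/2)
      = 2 ^ ((d:ℝ)+α) * (t ^ (1 - ((d:ℝ)+α)/2) / 2 ^ ((d:ℝ)+α)) := by
        field_simp
    _ ≤ 2 ^ ((d:ℝ)+α) * eta d α t (x - y) := by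
        exact mul_le_mul_of_nonneg_left h1 h2pos.le

/-- Key bound: for `t/2 ≤ r ≤ t` and `‖x-y‖ ≤ √t`, `η(r;u) ≤ 2^(2β) η(t;x-y)`. -/
lemma eta_mid {d : ℕ} {α t r : ℝ} (hβ : 2 ≤ (d : ℝ) + α) (ht : 0 < t)
    (hr1 : t / 2 ≤ r) (hr2 : r ≤ t) {x y : EuclideanSpace ℝ (Fin d)}
    (hxy : ‖x - y‖ ≤ t ^ ((1 : ℝ) / 2)) (u : EuclideanSpace ℝ (Fin d)) :
    eta d α r u ≤ 2 ^ (2 * ((d : ℝ) + α)) * eta d α t (x - y) := by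
  have hβ0 : (0:ℝ) < (d:ℝ) + α := by linarith
  have hr : 0 < r := lt_of_lt_of_le (half_pos ht) hr1
  have step1 : eta d α r u ≤ r ^ (1 - ((d:ℝ)+α)/2) := eta_le_rpow hβ0 hr u
  have step2 : r ^ (1 - ((d:ℝ)+α)/2) ≤ (t/2) ^ (1 - ((d:ℝ)+α)/2) :=
    Real.rpow_le_rpow_of_nonpos (half_pos ht) hr1 (by linarith)
  have step3 : (t/2) ^ (1 - ((d:ℝ)+α)/2)
      = t ^ (1 - ((d:ℝ)+α)/2) * 2 ^ (((d:ℝ)+α)/2 - 1) := by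
    rw [Real.div_rpow ht.le (by norm_num : (0:ℝ) ≤ 2), div_eq_mul_inv,
      ← Real.rpow_neg (by norm_num : (0:ℝ) ≤ 2),
      show -(1 - ((d:ℝ)+α)/2) = ((d:ℝ)+α)/2 - 1 by ring]
  have step4 : t ^ (1 - ((d:ℝ)+α)/2) ≤ 2 ^ ((d:ℝ)+α) * eta d α t (x - y) :=
    eta_lower hβ0 ht hxy
  have hη : 0 ≤ eta d α t (x - y) := eta_nonneg ht.le _
  have hexp : (2:ℝ) ^ ((d:ℝ)+α + (((d:ℝ)+α)/2 - 1)) ≤ 2 ^ (2 * ((d:ℝ)+α)) :=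
    Real.rpow_le_rpow_of_exponent_le one_le_two (by linarith)
  calc eta d α r u ≤ t ^ (1 - ((d:ℝ)+α)/2) * 2 ^ (((d:ℝ)+α)/2 - 1) := by
        rw [← step3]; exact step1.trans step2
    _ ≤ (2 ^ ((d:ℝ)+α) * eta d α t (x - y)) * 2 ^ (((d:ℝ)+α)/2 - 1) :=
        mul_le_mul_of_nonneg_right step4 (Real.rpow_nonneg (by norm_num) _)
    _ = (2 ^ ((d:ℝ)+α) * 2 ^ (((d:ℝ)+α)/2 - 1)) * eta d α t (x - y) := by
        rw [mul_right_comm]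
    _ = 2 ^ ((d:ℝ)+α + (((d:ℝ)+α)/2 - 1)) * eta d α t (x - y) := by
        rw [← Real.rpow_add (by norm_num : (0:ℝ) < 2)]
    _ ≤ 2 ^ (2 * ((d:ℝ)+α)) * eta d α t (x - y) :=
        mul_le_mul_of_nonneg_right hexp hη

/-- generalized 3P inequality for η, case |x-y| ≤ √t. -/
theorem stmt5 (d : ℕ) (hd : 2 ≤ d) (α : ℝ) (hα1 : 0 < α) (hα2 : α < 2) :
    ∃ C₄ : ℝ, 0 < C₄ ∧
      ∀ (F : EuclideanSpace ℝ (Fin d) → EuclideanSpace ℝ (Fin d) → ℝ),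
        Measurable (Function.uncurry F) → (∀ z w, 0 ≤ F z w) →
        (∃ B : ℝ, ∀ z w, F z w ≤ B) →
        ∀ t : ℝ, 0 < t → ∀ x y : EuclideanSpace ℝ (Fin d), ‖x - y‖ ≤ t ^ ((1 : ℝ) / 2) →
          (∫⁻ s in Set.Ioc (0 : ℝ) t,
              ∫⁻ zw : EuclideanSpace ℝ (Fin d) × EuclideanSpace ℝ (Fin d),
                ENNReal.ofReal (eta d α (t - s) (x - zw.1) * eta d α s (zw.2 - y) *
                  F zw.1 zw.2 / ‖zw.1 - zw.2‖ ^ ((d : ℝ) + α)))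
            ≤ ENNReal.ofReal (C₄ * eta d α t (x - y)) *
                ∫⁻ s in Set.Ioc (0 : ℝ) t,
                  ∫⁻ zw : EuclideanSpace ℝ (Fin d) × EuclideanSpace ℝ (Fin d),
                    ENNReal.ofReal ((eta d α s (x - zw.1) + eta d α s (zw.2 - y)) *
                      F zw.1 zw.2 / ‖zw.1 - zw.2‖ ^ ((d : ℝ) + α)) := by
  have hβ2 : (2:ℝ) ≤ (d:ℝ) + α := by
    have : (2:ℝ) ≤ (d:ℝ) := by exact_mod_cast hd
    linarith
  refine ⟨2 ^ (2 * ((d:ℝ) + α) + 1), Real.rpow_pos_of_pos (by norm_num) _, ?_⟩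
  intro F hFmeas hF0 hFb t ht x y hxy
  set β : ℝ := (d:ℝ) + α with hβdef
  set A : ℝ := 2 ^ (2 * β) * eta d α t (x - y) with hAdef
  have hηnn : 0 ≤ eta d α t (x - y) := eta_nonneg ht.le _
  have hA : 0 ≤ A := mul_nonneg (Real.rpow_nonneg (by norm_num) _) hηnn
  -- abbreviations for the three inner space integrals
  set J : ℝ → ℝ≥0∞ := fun s =>
    ∫⁻ zw : EuclideanSpace ℝ (Fin d) × EuclideanSpace ℝ (Fin d),
      ENNReal.ofReal ((eta d α s (x - zw.1) + eta d α s (zw.2 - y)) *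
        F zw.1 zw.2 / ‖zw.1 - zw.2‖ ^ β) with hJdef
  set K : ℝ → ℝ≥0∞ := fun r =>
    ∫⁻ zw : EuclideanSpace ℝ (Fin d) × EuclideanSpace ℝ (Fin d),
      ENNReal.ofReal (eta d α r (x - zw.1) * F zw.1 zw.2 / ‖zw.1 - zw.2‖ ^ β) with hKdef
  set I : ℝ → ℝ≥0∞ := fun s =>
    ∫⁻ zw : EuclideanSpace ℝ (Fin d) × EuclideanSpace ℝ (Fin d),
      ENNReal.ofReal (eta d α (t - s) (x - zw.1) * eta d α s (zw.2 - y) *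
        F zw.1 zw.2 / ‖zw.1 - zw.2‖ ^ β) with hIdef
  -- rewrite the constant
  have hC : ENNReal.ofReal (2 ^ (2 * β + 1) * eta d α t (x - y))
      = 2 * ENNReal.ofReal A := by
    rw [show (2:ℝ) ^ (2 * β + 1) = 2 * 2 ^ (2 * β) by
      rw [Real.rpow_add (by norm_num : (0:ℝ) < 2), Real.rpow_one]; ring]
    rw [mul_assoc, ENNReal.ofReal_mul (by norm_num : (0:ℝ) ≤ 2)]
    norm_num
    rfl
  rw [hC]
  -- split the time interval
  have hsplit : ∫⁻ s in Set.Ioc (0:ℝ) t, I s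
      = (∫⁻ s in Set.Ioc (0:ℝ) (t/2), I s) + ∫⁻ s in Set.Ioc (t/2) t, I s := by
    rw [← lintegral_union measurableSet_Ioc (Set.Ioc_disjoint_Ioc_of_le le_rfl),
      Set.Ioc_union_Ioc_eq_Ioc (by linarith) (by linarith)]
  -- Part 1 : s ∈ (0, t/2]
  have part1 : (∫⁻ s in Set.Ioc (0:ℝ) (t/2), I s)
      ≤ ENNReal.ofReal A * ∫⁻ s in Set.Ioc (0:ℝ) t, J s := by
    have hpt : ∀ s ∈ Set.Ioc (0:ℝ) (t/2), I s ≤ ENNReal.ofReal A * J s := by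
      intro s hs
      have hs0 : 0 < s := hs.1
      have hb : I s ≤ ∫⁻ zw : EuclideanSpace ℝ (Fin d) × EuclideanSpace ℝ (Fin d),
          ENNReal.ofReal A * ENNReal.ofReal ((eta d α s (x - zw.1) + eta d α s (zw.2 - y)) *
            F zw.1 zw.2 / ‖zw.1 - zw.2‖ ^ β) := by
        simp only [hIdef]
        apply lintegral_mono
        intro zw
        dsimp only
        rw [← ENNReal.ofReal_mul hA]
        apply ENNReal.ofReal_le_ofReal
        have ha : eta d α (t - s) (x - zw.1) ≤ A :=
          eta_mid hβ2 ht (by linarith [hs.2]) (by linarith) hxy _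
        have hbnn : 0 ≤ eta d α s (zw.2 - y) := eta_nonneg hs0.le _
        have he1 : 0 ≤ eta d α s (x - zw.1) := eta_nonneg hs0.le _
        rw [show A * ((eta d α s (x - zw.1) + eta d α s (zw.2 - y)) *
            F zw.1 zw.2 / ‖zw.1 - zw.2‖ ^ β)
          = A * ((eta d α s (x - zw.1) + eta d α s (zw.2 - y)) * F zw.1 zw.2)
            / ‖zw.1 - zw.2‖ ^ β by ring]
        apply my_div_le_div _ (Real.rpow_nonneg (norm_nonneg _) _)
        calc eta d α (t - s) (x - zw.1) * eta d α s (zw.2 - y) * F zw.1 zw.2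
            = eta d α (t - s) (x - zw.1) * (eta d α s (zw.2 - y) * F zw.1 zw.2) :=
              mul_assoc _ _ _
          _ ≤ A * ((eta d α s (x - zw.1) + eta d α s (zw.2 - y)) * F zw.1 zw.2) :=
              mul_le_mul ha
                (mul_le_mul_of_nonneg_right (le_add_of_nonneg_left he1) (hF0 _ _))
                (mul_nonneg hbnn (hF0 _ _)) hA
      refine hb.trans ?_
      rw [lintegral_const_mul' _ _ ENNReal.ofReal_ne_top]
    have h1 : (∫⁻ s in Set.Ioc (0:ℝ) (t/2), I s)
        ≤ ∫⁻ s in Set.Ioc (0:ℝ) (t/2), ENNReal.ofReal A * J s :=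
      setLIntegral_mono' measurableSet_Ioc hpt
    rw [lintegral_const_mul' _ _ ENNReal.ofReal_ne_top] at h1
    exact h1.trans (mul_le_mul_right
      (lintegral_mono_set (Set.Ioc_subset_Ioc_right (by linarith))) _)
  -- Part 2 : s ∈ (t/2, t]
  have part2 : (∫⁻ s in Set.Ioc (t/2) t, I s)
      ≤ ENNReal.ofReal A * ∫⁻ s in Set.Ioc (0:ℝ) t, J s := by
    have hpt : ∀ s ∈ Set.Ioc (t/2) t, I s ≤ ENNReal.ofReal A * K (t - s) := by
      intro s hs
      have hb : I s ≤ ∫⁻ zw : EuclideanSpace ℝ (Fin d) × EuclideanSpace ℝ (Fin d),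
          ENNReal.ofReal A * ENNReal.ofReal (eta d α (t - s) (x - zw.1) *
            F zw.1 zw.2 / ‖zw.1 - zw.2‖ ^ β) := by
        simp only [hIdef]
        apply lintegral_mono
        intro zw
        dsimp only
        rw [← ENNReal.ofReal_mul hA]
        apply ENNReal.ofReal_le_ofReal
        have hbA : eta d α s (zw.2 - y) ≤ A := eta_mid hβ2 ht hs.1.le hs.2 hxy _
        have hann : 0 ≤ eta d α (t - s) (x - zw.1) := eta_nonneg (by linarith [hs.2]) _
        rw [show A * (eta d α (t - s) (x - zw.1) * F zw.1 zw.2 / ‖zw.1 - zw.2‖ ^ β)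
          = A * (eta d α (t - s) (x - zw.1) * F zw.1 zw.2) / ‖zw.1 - zw.2‖ ^ β by ring]
        apply my_div_le_div _ (Real.rpow_nonneg (norm_nonneg _) _)
        calc eta d α (t - s) (x - zw.1) * eta d α s (zw.2 - y) * F zw.1 zw.2
            = eta d α s (zw.2 - y) * (eta d α (t - s) (x - zw.1) * F zw.1 zw.2) := by ring
          _ ≤ A * (eta d α (t - s) (x - zw.1) * F zw.1 zw.2) :=
              mul_le_mul_of_nonneg_right hbA (mul_nonneg hann (hF0 _ _))
      refine hb.trans ?_
      rw [lintegral_const_mul' _ _ ENNReal.ofReal_ne_top]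
    have cov : (∫⁻ s in Set.Ioc (t/2) t, K (t - s)) = ∫⁻ r in Set.Ico (0:ℝ) (t/2), K r := by
      have hpre : (fun s : ℝ => t - s) ⁻¹' (Set.Ico 0 (t/2)) = Set.Ioc (t/2) t := by
        ext s
        simp only [Set.mem_preimage, Set.mem_Ico, Set.mem_Ioc]
        constructor <;> rintro ⟨h1, h2⟩ <;> exact ⟨by linarith, by linarith⟩
      rw [← hpre]
      exact (Measure.measurePreserving_sub_left volume t).setLIntegral_comp_preimage_emb
        (MeasurableEquiv.subLeft t).measurableEmbedding _ _
    have hKJ : ∀ r ∈ Set.Ioc (0:ℝ) t, K r ≤ J r := by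
      intro r hr
      simp only [hKdef, hJdef]
      apply lintegral_mono
      intro zw
      apply ENNReal.ofReal_le_ofReal
      apply my_div_le_div _ (Real.rpow_nonneg (norm_nonneg _) _)
      apply mul_le_mul_of_nonneg_right _ (hF0 _ _)
      exact le_add_of_nonneg_right (eta_nonneg hr.1.le _)
    have h1 : (∫⁻ s in Set.Ioc (t/2) t, I s)
        ≤ ∫⁻ s in Set.Ioc (t/2) t, ENNReal.ofReal A * K (t - s) :=
      setLIntegral_mono' measurableSet_Ioc hpt
    rw [lintegral_const_mul' _ _ ENNReal.ofReal_ne_top, cov] at h1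
    refine h1.trans (mul_le_mul_right ?_ _)
    calc (∫⁻ r in Set.Ico (0:ℝ) (t/2), K r)
        = ∫⁻ r in Set.Ioo (0:ℝ) (t/2), K r :=
          (setLIntegral_congr (Ioo_ae_eq_Ico (μ := volume) (a := (0:ℝ)) (b := t/2))).symm
      _ ≤ ∫⁻ r in Set.Ioc (0:ℝ) t, K r :=
          lintegral_mono_set
            (Set.Ioo_subset_Ioc_self.trans (Set.Ioc_subset_Ioc_right (by linarith)))
      _ ≤ ∫⁻ r in Set.Ioc (0:ℝ) t, J r := setLIntegral_mono' measurableSet_Ioc hKJ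
  rw [hsplit]
  refine (add_le_add part1 part2).trans ?_
  rw [two_mul, add_mul]
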